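/- Let A, B be n×n matrices over the tropical semiring T = ℝ ∪ {-∞}. If A = PBQ with P, Q ∈ M_n(T̄) where T̄ = ℝ ∪ {-∞, +∞}, then A = P'BQ' where P', Q' are obtained from P, Q by replacing every +∞ entry with 0. Consequently A ≤_J B in M_n(T) if and only if A ≤_J B in M_n(T̄). -/

import Mathlib

/-!
If `(P B Q)_{ij} ≠ +∞`, then by associativity every term `P_{ik} + (B Q)_{kj}` of `(P (B Q))_{ij}`
is `≠ +∞`; as `x + y ≠ +∞` with `x = +∞` forces `y = -∞`, replacing `+∞` entries of `P` by `0`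
changes no term. The same argument applied to `Q` in `(P' B) Q` gives `A = P' B Q'`, and `P'`, `Q'`
have entries in `T`. The other three forms of `A ≤_J B` in `M_n(T̄)` are instances of `A = P B Q`
through the tropical identity matrix.
-/

/-- Tropical (max-plus) matrix multiplication: `(X ⊗ Y)_{ij} = max_k (X_{ik} + Y_{kj})`.
Over `EReal` the additive convention `(-∞) + (+∞) = -∞` holds. -/
def tropMul {S : Type*} [SemilatticeSup S] [Add S] {n : ℕ} [NeZero n]
    (X Y : Matrix (Fin n) (Fin n) S) : Matrix (Fin n) (Fin n) S :=
  fun i j => Finset.univ.sup' Finset.univ_nonempty fun k => X i k + Y k j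

/-- Green's `J`-order: `A ≤_J B` iff `A ∈ M¹ B M¹`. -/
def JleGen {M : Type*} (mul : M → M → M) (A B : M) : Prop :=
  A = B ∨ (∃ P, A = mul P B) ∨ (∃ Q, A = mul B Q) ∨ ∃ P Q, A = mul (mul P B) Q

/-- Embed `T = ℝ ∪ {-∞} = WithBot ℝ` into `T̄ = EReal`. -/
noncomputable def botToE : WithBot ℝ → EReal := WithBot.recBotCoe ⊥ (fun r => (r : EReal))

/-- Entrywise embedding of matrices over `T` into matrices over `T̄`. -/
noncomputable def botToEMat {n : ℕ} (A : Matrix (Fin n) (Fin n) (WithBot ℝ)) :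
    Matrix (Fin n) (Fin n) EReal := fun i j => botToE (A i j)

open Classical in
/-- Replace a `+∞` entry by `0`, leaving all other entries unchanged. -/
noncomputable def replaceTop (a : EReal) : EReal := if a = ⊤ then 0 else a

section TropMul

variable {S : Type*} [LinearOrder S] [AddSemigroup S]

lemma Finset.sup'_add_right [AddRightMono S] {ι : Type*} (s : Finset ι) (hs : s.Nonempty)
    (f : ι → S) (c : S) :
    s.sup' hs f + c = s.sup' hs fun i => f i + c :=
  s.apply_sup'_eq_sup'_comp hs (· + c) add_left_mono.map_sup

lemma Finset.add_sup'_left [AddLeftMono S] {ι : Type*} (s : Finset ι) (hs : s.Nonempty)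
    (f : ι → S) (c : S) :
    c + s.sup' hs f = s.sup' hs fun i => c + f i :=
  s.apply_sup'_eq_sup'_comp hs (c + ·) add_right_mono.map_sup

lemma tropMul_assoc [AddLeftMono S] [AddRightMono S] {n : ℕ} [NeZero n]
    (X Y Z : Matrix (Fin n) (Fin n) S) :
    tropMul (tropMul X Y) Z = tropMul X (tropMul Y Z) := by
  funext i j
  simp only [tropMul, Finset.sup'_add_right, Finset.add_sup'_left, add_assoc]
  exact Finset.sup'_comm _ _ _

end TropMul

section JOrder

variable {M N : Type*}

lemma JleGen.map {mul : M → M → M} {mul' : N → N → N} {f : M → N}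
    (hf : ∀ x y, f (mul x y) = mul' (f x) (f y)) {A B : M} :
    JleGen mul A B → JleGen mul' (f A) (f B) := by
  rintro (rfl | ⟨P, rfl⟩ | ⟨Q, rfl⟩ | ⟨P, Q, rfl⟩)
  · exact Or.inl rfl
  · exact Or.inr <| Or.inl ⟨f P, hf P B⟩
  · exact Or.inr <| Or.inr <| Or.inl ⟨f Q, hf B Q⟩
  · exact Or.inr <| Or.inr <| Or.inr ⟨f P, f Q, by rw [hf, hf]⟩

lemma JleGen.exists_eq_mul_mul {mul : M → M → M} {e : M} (one_mul : ∀ x, mul e x = x)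
    (mul_one : ∀ x, mul x e = x) {A B : M} (h : JleGen mul A B) :
    ∃ P Q, A = mul (mul P B) Q := by
  rcases h with rfl | ⟨P, rfl⟩ | ⟨Q, rfl⟩ | ⟨P, Q, rfl⟩
  · exact ⟨e, e, by rw [one_mul, mul_one]⟩
  · exact ⟨P, e, (mul_one _).symm⟩
  · exact ⟨e, Q, by rw [one_mul]⟩
  · exact ⟨P, Q, rfl⟩

end JOrder

section ReplaceTop

lemma replaceTop_ne_top (a : EReal) : replaceTop a ≠ ⊤ := by
  unfold replaceTop
  split_ifs with h
  · exact EReal.zero_ne_top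
  · exact h

lemma replaceTop_add_of_add_ne_top {x y : EReal} (h : x + y ≠ ⊤) :
    replaceTop x + y = x + y := by
  by_cases hx : x = ⊤
  · have hy : y = ⊥ := by
      by_contra hy
      exact h (by rw [hx, EReal.top_add_of_ne_bot hy])
    rw [hy, EReal.add_bot, EReal.add_bot]
  · rw [replaceTop, if_neg hx]

lemma add_replaceTop_of_add_ne_top {x y : EReal} (h : x + y ≠ ⊤) :
    x + replaceTop y = x + y := by
  rw [add_comm x, add_comm x]
  exact replaceTop_add_of_add_ne_top (add_comm x y ▸ h)

variable {n : ℕ} [NeZero n] {X Y : Matrix (Fin n) (Fin n) EReal} {i j : Fin n}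

lemma tropMul_map_replaceTop_left_apply (h : tropMul X Y i j ≠ ⊤) :
    tropMul (X.map replaceTop) Y i j = tropMul X Y i j :=
  Finset.sup'_congr _ rfl fun _ hk => replaceTop_add_of_add_ne_top <|
    ne_top_of_le_ne_top h (Finset.le_sup' (fun k => X i k + Y k j) hk)

lemma tropMul_map_replaceTop_right_apply (h : tropMul X Y i j ≠ ⊤) :
    tropMul X (Y.map replaceTop) i j = tropMul X Y i j :=
  Finset.sup'_congr _ rfl fun _ hk => add_replaceTop_of_add_ne_top <|
    ne_top_of_le_ne_top h (Finset.le_sup' (fun k => X i k + Y k j) hk)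

theorem tropMul_map_replaceTop_of_ne_top {P B Q : Matrix (Fin n) (Fin n) EReal}
    (h : ∀ i j, tropMul (tropMul P B) Q i j ≠ ⊤) :
    tropMul (tropMul (P.map replaceTop) B) (Q.map replaceTop) = tropMul (tropMul P B) Q := by
  funext i j
  have hP : tropMul (tropMul (P.map replaceTop) B) Q i j = tropMul (tropMul P B) Q i j := by
    rw [tropMul_assoc, tropMul_assoc,
      tropMul_map_replaceTop_left_apply (by rw [← tropMul_assoc]; exact h i j)]
  rw [tropMul_map_replaceTop_right_apply (hP ▸ h i j), hP]

end ReplaceTop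

section Embedding

lemma botToE_ne_top (x : WithBot ℝ) : botToE x ≠ ⊤ := by
  cases x <;> simp [botToE]

lemma botToE_injective : Function.Injective botToE := by
  intro x y h
  cases x <;> cases y <;> simp_all [botToE]

lemma botToE_add (x y : WithBot ℝ) : botToE (x + y) = botToE x + botToE y := by
  cases x <;> cases y <;> simp [botToE]
  rfl

lemma botToE_monotone : Monotone botToE := by
  intro x y h
  cases x <;> cases y <;> simp_all [botToE]

lemma exists_botToE_eq {x : EReal} (hx : x ≠ ⊤) : ∃ y, botToE y = x := by
  induction x using EReal.rec with
  | bot => exact ⟨⊥, rfl⟩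
  | coe r => exact ⟨r, rfl⟩
  | top => exact absurd rfl hx

variable {n : ℕ}

lemma botToEMat_injective : Function.Injective (botToEMat (n := n)) :=
  fun _ _ h => funext fun i => funext fun j => botToE_injective (congrFun (congrFun h i) j)

lemma exists_botToEMat_eq {X : Matrix (Fin n) (Fin n) EReal} (hX : ∀ i j, X i j ≠ ⊤) :
    ∃ Y, botToEMat Y = X := by
  choose Y hY using fun i j => exists_botToE_eq (hX i j)
  exact ⟨Y, funext fun i => funext fun j => hY i j⟩

lemma botToEMat_tropMul [NeZero n] (X Y : Matrix (Fin n) (Fin n) (WithBot ℝ)) :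
    botToEMat (tropMul X Y) = tropMul (botToEMat X) (botToEMat Y) := by
  funext i j
  refine (Finset.univ.apply_sup'_eq_sup'_comp _ botToE botToE_monotone.map_sup).trans ?_
  exact Finset.sup'_congr _ rfl fun k _ => botToE_add _ _

end Embedding

noncomputable def tropOne (n : ℕ) : Matrix (Fin n) (Fin n) EReal :=
  fun i j => if i = j then 0 else ⊥

section TropOne

variable {n : ℕ} [NeZero n]

lemma tropMul_tropOne (X : Matrix (Fin n) (Fin n) EReal) : tropMul X (tropOne n) = X := by
  funext i j
  refine le_antisymm (Finset.sup'_le _ _ fun k _ => ?_)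
    (Finset.le_sup'_of_le _ (Finset.mem_univ j) (by simp [tropOne]))
  by_cases hk : k = j <;> simp [tropOne, hk]

lemma tropOne_tropMul (X : Matrix (Fin n) (Fin n) EReal) : tropMul (tropOne n) X = X := by
  funext i j
  refine le_antisymm (Finset.sup'_le _ _ fun k _ => ?_)
    (Finset.le_sup'_of_le _ (Finset.mem_univ i) (by simp [tropOne]))
  by_cases hk : i = k <;> simp [tropOne, hk]

end TropOne

/-- If `A, B` are over `T = ℝ ∪ {-∞}` and `A = P B Q` with `P, Q` over
`T̄ = ℝ ∪ {±∞}`, then `A = P' B Q'` where `P', Q'` are obtained by replacing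
every `+∞` entry of `P, Q` by `0`.  Consequently `A ≤_J B` in `M_n(T)` iff
`A ≤_J B` in `M_n(T̄)`. -/
theorem stmt9 {n : ℕ} [NeZero n] (A B : Matrix (Fin n) (Fin n) (WithBot ℝ)) :
    (∀ P Q : Matrix (Fin n) (Fin n) EReal,
        botToEMat A = tropMul (tropMul P (botToEMat B)) Q →
        botToEMat A =
          tropMul (tropMul (fun i j => replaceTop (P i j)) (botToEMat B))
            (fun i j => replaceTop (Q i j))) ∧
      (JleGen tropMul A B ↔ JleGen tropMul (botToEMat A) (botToEMat B)) := by
  have factor : ∀ P Q : Matrix (Fin n) (Fin n) EReal,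
      botToEMat A = tropMul (tropMul P (botToEMat B)) Q →
      botToEMat A = tropMul (tropMul (P.map replaceTop) (botToEMat B)) (Q.map replaceTop) := by
    intro P Q h
    rw [tropMul_map_replaceTop_of_ne_top (h ▸ fun i j => botToE_ne_top (A i j)), h]
  refine ⟨factor, JleGen.map botToEMat_tropMul, fun hJ => ?_⟩
  obtain ⟨P, Q, h⟩ := hJ.exists_eq_mul_mul tropOne_tropMul tropMul_tropOne
  obtain ⟨P', hP'⟩ := exists_botToEMat_eq fun i j => replaceTop_ne_top (P i j)
  obtain ⟨Q', hQ'⟩ := exists_botToEMat_eq fun i j => replaceTop_ne_top (Q i j)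
  refine Or.inr <| Or.inr <| Or.inr ⟨P', Q', botToEMat_injective ?_⟩
  rw [botToEMat_tropMul, botToEMat_tropMul, hP', hQ']
  exact factor P Q h
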